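/- Let G = (V, E, w) be a weighted digraph with a laminar topological order (<_D, 𝒫), enumerate V as v₁ <_D v₂ <_D … <_D v_n, and let H be a 2-hop spanner with respect to this enumeration. Let D₁ be a weighted digraph on V that contains, for every (v_i, v_j) ∈ H with v_i ⇝_G v_j, the edge (v_i, v_j) with weight d_G(v_i, v_j), and let D₂ be a weighted digraph on V that contains, for every (v_i, v_j) ∈ H with v_j ⇝_G v_i, the edge (v_j, v_i) with weight d_G(v_j, v_i). For s, t ∈ V define α(s, t) := d_{D₁}(s, t) if s = t or s <_D t, and α(s, t) := 3·Δ_{s,t} otherwise. Then for all s, t ∈ V: (i) if s = t or s <_D t then d_{D₁}(s, t) ≤ α(s, t), and if s = t or t <_D s then d_{D₂}(s, t) ≤ α(s, t); and (ii) if s and t both belong to some cluster C ∈ 𝒫 whose weak diameter satisfies Δ_C ≤ Δ, then α(s, t) ≤ 3Δ. -/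

import Mathlib

/-!
Let `s, t` lie in a cluster `C`. Since `C` is an interval, the 2-hop spanner joins them by at
most two pairs of `H` all of whose vertices lie in `C`; since `C` is strongly connected, each
pair is reachable in `G` and so is an edge of `D₁` (reversed: of `D₂`) of weight at most `Δ_C`.
Hence `d_{D₁}(s, t)` and `d_{D₂}(s, t)` are at most `2 Δ_C ≤ 3 Δ_C`, which bounds `α` on both
sides of the diagonal.
-/

open scoped ENNReal BigOperators

/-- A weighted digraph: edges `E` with no self-loops and positive real weights. -/
structure WDigraph (V : Type) where
  E : V → V → Prop
  no_self : ∀ v : V, ¬ E v v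
  w : V → V → ℝ
  w_pos : ∀ u v : V, E u v → 0 < w u v

namespace WDigraph

variable {V : Type}

/-- `PathW G u v c`: there is a directed path from `u` to `v` in `G` of total weight `c`. -/
inductive PathW (G : WDigraph V) : V → V → ℝ → Prop
  | nil (u : V) : PathW G u u 0
  | cons {u x v : V} {c : ℝ} : G.E u x → PathW G x v c → PathW G u v (G.w u x + c)

/-- `u ⇝_G v`: there is a directed path from `u` to `v`. -/
def Reach (G : WDigraph V) (u v : V) : Prop := Relation.ReflTransGen G.E u v

/-- The shortest-path quasimetric: infimum of path weights, `∞` if no path exists. -/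
noncomputable def dist (G : WDigraph V) (u v : V) : ℝ≥0∞ :=
  ⨅ (c : ℝ) (_ : G.PathW u v c), ENNReal.ofReal c

/-- A DAG: no vertex has a nonempty directed path to itself. -/
def IsDAG (G : WDigraph V) : Prop := ∀ v : V, ¬ Relation.TransGen G.E v v

/-- Number of edges of the digraph. -/
noncomputable def edgeCount (G : WDigraph V) : ℕ := Nat.card {p : V × V // G.E p.1 p.2}

end WDigraph

/-- A laminar topological order of a weighted digraph `G` over a linearly ordered vertex
set: a laminar family of clusters containing all singletons, each cluster being an
interval of the order and inducing a strongly connected subgraph. -/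
structure LaminarTO {V : Type} [LinearOrder V] (G : WDigraph V) where
  P : Set (Set V)
  nonempty_mem : ∀ C ∈ P, C.Nonempty
  singleton_mem : ∀ v : V, ({v} : Set V) ∈ P
  laminar : ∀ C₁ ∈ P, ∀ C₂ ∈ P, C₁ ∩ C₂ = ∅ ∨ C₁ ⊆ C₂ ∨ C₂ ⊆ C₁
  interval : ∀ C ∈ P, ∀ u ∈ C, ∀ v ∈ C, ∀ x : V, u ≤ x → x ≤ v → x ∈ C
  strongly_connected : ∀ C ∈ P, ∀ u ∈ C, ∀ v ∈ C,
    Relation.ReflTransGen (fun a b => G.E a b ∧ a ∈ C ∧ b ∈ C) u v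

/-- The weak diameter `Δ_C` of a cluster `C`. -/
noncomputable def clusterDiam {V : Type} (G : WDigraph V) (C : Set V) : ℝ≥0∞ :=
  ⨆ x ∈ C, ⨆ y ∈ C, G.dist x y

/-- `Δ_{s,t}`: the weak diameter of the inclusion-minimal cluster of the laminar family
containing both `s` and `t` (by laminarity and monotonicity of the diameter this equals
the infimum below), and `∞` if no cluster contains both. -/
noncomputable def pairDiam {V : Type} [LinearOrder V] {G : WDigraph V}
    (LP : LaminarTO G) (s t : V) : ℝ≥0∞ :=
  ⨅ (C : Set V) (_ : C ∈ LP.P) (_ : s ∈ C) (_ : t ∈ C), clusterDiam G C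

/-- A 2-hop spanner of the linearly ordered vertex set: for every `u < v`, either
`(u,v) ∈ H` or some `x` with `u < x < v` satisfies `(u,x) ∈ H` and `(x,v) ∈ H`. -/
def TwoHopSpanner {V : Type} [LinearOrder V] (H : Set (V × V)) : Prop :=
  (∀ p ∈ H, p.1 < p.2) ∧
  ∀ u v : V, u < v → ((u, v) ∈ H ∨ ∃ x : V, u < x ∧ x < v ∧ (u, x) ∈ H ∧ (x, v) ∈ H)

/-- `α(s,t) := d_{D₁}(s,t)` if `s = t` or `s <_D t`, and `α(s,t) := 3·Δ_{s,t}` otherwise. -/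
noncomputable def alphaFn {V : Type} [LinearOrder V] {G : WDigraph V}
    (LP : LaminarTO G) (D₁ : WDigraph V) (s t : V) : ℝ≥0∞ :=
  if s ≤ t then D₁.dist s t else 3 * pairDiam LP s t


namespace WDigraph

variable {V : Type}

def HasShortcut (D G : WDigraph V) (u v : V) : Prop :=
  D.E u v ∧ ENNReal.ofReal (D.w u v) = G.dist u v

theorem PathW.append {G : WDigraph V} {u x v : V} {a b : ℝ}
    (h₁ : G.PathW u x a) (h₂ : G.PathW x v b) : G.PathW u v (a + b) := by
  induction h₁ with
  | nil => simpa using h₂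
  | cons e _ ih => rw [add_assoc]; exact .cons e (ih h₂)

theorem dist_le_of_pathW {G : WDigraph V} {u v : V} {c : ℝ} (h : G.PathW u v c) :
    G.dist u v ≤ ENNReal.ofReal c :=
  iInf₂_le c h

@[simp]
theorem dist_self (G : WDigraph V) (u : V) : G.dist u u = 0 :=
  nonpos_iff_eq_zero.1 (by simpa using dist_le_of_pathW (PathW.nil (G := G) u))

theorem dist_triangle (G : WDigraph V) (u x v : V) :
    G.dist u v ≤ G.dist u x + G.dist x v := by
  simp only [dist, ENNReal.iInf_add, ENNReal.add_iInf]
  exact le_iInf₂ fun b hb => le_iInf₂ fun a ha =>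
    (dist_le_of_pathW (ha.append hb)).trans ENNReal.ofReal_add_le

theorem HasShortcut.dist_le {D G : WDigraph V} {u v : V} (h : D.HasShortcut G u v) :
    D.dist u v ≤ G.dist u v := by
  simpa [h.2] using dist_le_of_pathW (PathW.cons h.1 (PathW.nil (G := D) v))

theorem dist_le_clusterDiam (G : WDigraph V) {C : Set V} {u v : V} (hu : u ∈ C)
    (hv : v ∈ C) : G.dist u v ≤ clusterDiam G C :=
  le_iSup₂_of_le u hu (le_iSup₂_of_le v hv le_rfl)

theorem dist_le_two_mul_clusterDiam_of_hops {G D : WDigraph V} {C : Set V}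
    {hop : V → V → Prop} (hhop : ∀ a ∈ C, ∀ b ∈ C, hop a b → D.dist a b ≤ G.dist a b)
    {s t : V} (hs : s ∈ C) (ht : t ∈ C) (hst : hop s t ∨ ∃ x ∈ C, hop s x ∧ hop x t) :
    D.dist s t ≤ 2 * clusterDiam G C := by
  rw [two_mul]
  rcases hst with h | ⟨x, hx, h₁, h₂⟩
  · exact (hhop s hs t ht h).trans ((G.dist_le_clusterDiam hs ht).trans le_self_add)
  · calc D.dist s t ≤ D.dist s x + D.dist x t := D.dist_triangle s x t
      _ ≤ G.dist s x + G.dist x t := add_le_add (hhop s hs x hx h₁) (hhop x hx t ht h₂)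
      _ ≤ _ := add_le_add (G.dist_le_clusterDiam hs hx) (G.dist_le_clusterDiam hx ht)

end WDigraph

section LinearOrder

variable {V : Type} [LinearOrder V]

theorem TwoHopSpanner.hops_of_mem_interval {H : Set (V × V)} (hH : TwoHopSpanner H)
    {C : Set V} (hC : ∀ u ∈ C, ∀ v ∈ C, ∀ x : V, u ≤ x → x ≤ v → x ∈ C) {u v : V}
    (hu : u ∈ C) (hv : v ∈ C) (huv : u < v) :
    (u, v) ∈ H ∨ ∃ x ∈ C, (u, x) ∈ H ∧ (x, v) ∈ H :=
  (hH.2 u v huv).imp id fun ⟨x, hux, hxv, h₁, h₂⟩ =>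
    ⟨x, hC u hu v hv x hux.le hxv.le, h₁, h₂⟩

namespace LaminarTO

variable {G : WDigraph V} (LP : LaminarTO G) {C : Set V} {s t : V}

theorem reach (hC : C ∈ LP.P) (hs : s ∈ C) (ht : t ∈ C) : G.Reach s t :=
  Relation.ReflTransGen.mono (fun _ _ h => h.1) _ _ (LP.strongly_connected C hC s hs t ht)

theorem pairDiam_le (hC : C ∈ LP.P) (hs : s ∈ C) (ht : t ∈ C) :
    pairDiam LP s t ≤ clusterDiam G C :=
  iInf₂_le_of_le C hC (iInf₂_le hs ht)

theorem le_three_mul_pairDiam {x : ℝ≥0∞}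
    (h : ∀ C ∈ LP.P, s ∈ C → t ∈ C → x ≤ 2 * clusterDiam G C) :
    x ≤ 3 * pairDiam LP s t := by
  simp only [pairDiam, ENNReal.mul_iInf_of_ne (by norm_num : (3 : ℝ≥0∞) ≠ 0)
    (by norm_num : (3 : ℝ≥0∞) ≠ ⊤)]
  exact le_iInf₂ fun C hC => le_iInf₂ fun hs ht =>
    (h C hC hs ht).trans (mul_le_mul_left (by norm_num) _)

variable {H : Set (V × V)} {D : WDigraph V}

theorem dist_le_two_mul_clusterDiam_of_le (hH : TwoHopSpanner H)
    (hD : ∀ p ∈ H, G.Reach p.1 p.2 → D.HasShortcut G p.1 p.2)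
    (hC : C ∈ LP.P) (hs : s ∈ C) (ht : t ∈ C) (hst : s ≤ t) :
    D.dist s t ≤ 2 * clusterDiam G C := by
  rcases hst.eq_or_lt with rfl | hlt
  · simp
  exact WDigraph.dist_le_two_mul_clusterDiam_of_hops
    (fun a ha b hb hab => (hD (a, b) hab (LP.reach hC ha hb)).dist_le) hs ht
    (hH.hops_of_mem_interval (LP.interval C hC) hs ht hlt)

theorem dist_le_two_mul_clusterDiam_of_ge (hH : TwoHopSpanner H)
    (hD : ∀ p ∈ H, G.Reach p.2 p.1 → D.HasShortcut G p.2 p.1)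
    (hC : C ∈ LP.P) (hs : s ∈ C) (ht : t ∈ C) (hts : t ≤ s) :
    D.dist s t ≤ 2 * clusterDiam G C := by
  rcases hts.eq_or_lt with rfl | hlt
  · simp
  refine WDigraph.dist_le_two_mul_clusterDiam_of_hops (hop := fun a b => (b, a) ∈ H)
    (fun a ha b hb hab => (hD (b, a) hab (LP.reach hC ha hb)).dist_le) hs ht ?_
  exact (hH.hops_of_mem_interval (LP.interval C hC) ht hs hlt).imp id
    fun ⟨x, hx, h₁, h₂⟩ => ⟨x, hx, h₂, h₁⟩

end LaminarTO

end LinearOrder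

theorem alpha_dominates_general {V : Type} [LinearOrder V]
    (G : WDigraph V) (LP : LaminarTO G) (H : Set (V × V)) (hH : TwoHopSpanner H)
    (D₁ D₂ : WDigraph V)
    (hD₁ : ∀ p ∈ H, G.Reach p.1 p.2 →
      D₁.E p.1 p.2 ∧ ENNReal.ofReal (D₁.w p.1 p.2) = G.dist p.1 p.2)
    (hD₂ : ∀ p ∈ H, G.Reach p.2 p.1 →
      D₂.E p.2 p.1 ∧ ENNReal.ofReal (D₂.w p.2 p.1) = G.dist p.2 p.1) :
    ∀ s t : V,
      ((s ≤ t → D₁.dist s t ≤ alphaFn LP D₁ s t) ∧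
        (t ≤ s → D₂.dist s t ≤ alphaFn LP D₁ s t)) ∧
      (∀ C ∈ LP.P, s ∈ C → t ∈ C → ∀ Δ : ℝ≥0∞, clusterDiam G C ≤ Δ →
        alphaFn LP D₁ s t ≤ 3 * Δ) := by
  intro s t
  refine ⟨⟨fun hst => by rw [alphaFn, if_pos hst], fun hts => ?_⟩, fun C hC hs ht Δ hΔ => ?_⟩
  · by_cases hst : s ≤ t
    · simp [le_antisymm hst hts]
    rw [alphaFn, if_neg hst]
    exact LP.le_three_mul_pairDiam fun C hC hs ht => LP.dist_le_two_mul_clusterDiam_of_ge hH hD₂ hC hs ht hts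
  · rw [alphaFn]
    split_ifs with hst
    · calc D₁.dist s t ≤ 2 * clusterDiam G C := LP.dist_le_two_mul_clusterDiam_of_le hH hD₁ hC hs ht hst
        _ ≤ 3 * Δ := mul_le_mul' (by norm_num) hΔ
    · exact mul_le_mul_right ((LP.pairDiam_le hC hs ht).trans hΔ) 3

/-- (i) `d_{D₁}(s,t) ≤ α(s,t)` when `s ≤_D t` and `d_{D₂}(s,t) ≤ α(s,t)`
when `t ≤_D s`; (ii) if `s` and `t` lie in a common cluster of weak diameter at most `Δ`,
then `α(s,t) ≤ 3Δ`. -/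
theorem alpha_dominates {V : Type} [Fintype V] [LinearOrder V]
    (G : WDigraph V) (LP : LaminarTO G) (H : Set (V × V)) (hH : TwoHopSpanner H)
    (D₁ D₂ : WDigraph V)
    (hD₁ : ∀ p ∈ H, G.Reach p.1 p.2 →
      D₁.E p.1 p.2 ∧ ENNReal.ofReal (D₁.w p.1 p.2) = G.dist p.1 p.2)
    (hD₂ : ∀ p ∈ H, G.Reach p.2 p.1 →
      D₂.E p.2 p.1 ∧ ENNReal.ofReal (D₂.w p.2 p.1) = G.dist p.2 p.1) :
    ∀ s t : V,
      ((s ≤ t → D₁.dist s t ≤ alphaFn LP D₁ s t) ∧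
        (t ≤ s → D₂.dist s t ≤ alphaFn LP D₁ s t)) ∧
      (∀ C ∈ LP.P, s ∈ C → t ∈ C → ∀ Δ : ℝ≥0∞, clusterDiam G C ≤ Δ →
        alphaFn LP D₁ s t ≤ 3 * Δ) :=
  alpha_dominates_general G LP H hH D₁ D₂ hD₁ hD₂
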